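/- Let T be a pointwise map with respect to an oriented hyperplane H on measurable functions. If T is a rearrangement (equimeasurable and monotonic), then its associated functions F⁺ and F⁻ are continuous on ℝ². -/
import Mathlib


open MeasureTheory Set RealInnerProductSpace

theorem aux_cont_stmt10 (P M : ℝ → ℝ → ℝ)
    (hP : ∀ a a' b b' : ℝ, a ≤ a' → b ≤ b' → P a b ≤ P a' b')
    (hM : ∀ a a' b b' : ℝ, a ≤ a' → b ≤ b' → M a b ≤ M a' b')
    (hmax : ∀ a b : ℝ, max (P a b) (M b a) = max a b)
    (hmin : ∀ a b : ℝ, min (P a b) (M b a) = min a b) :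
    Continuous (fun p : ℝ × ℝ => P p.1 p.2) := by
  have hmem : ∀ a b : ℝ, P a b = a ∨ P a b = b := by
    intro a b
    rcases le_total (P a b) (M b a) with h | h
    · have : P a b = min a b := by rw [← hmin a b, min_eq_left h]
      rcases min_cases a b with ⟨h1, _⟩ | ⟨h1, _⟩ <;> rw [this, h1] <;> simp
    · have : P a b = max a b := by rw [← hmax a b, max_eq_left h]
      rcases max_cases a b with ⟨h1, _⟩ | ⟨h1, _⟩ <;> rw [this, h1] <;> simp
  have hmemM : ∀ a b : ℝ, M b a = a ∨ M b a = b := by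
    intro a b
    rcases le_total (P a b) (M b a) with h | h
    · have : M b a = max a b := by rw [← hmax a b, max_eq_right h]
      rcases max_cases a b with ⟨h1, _⟩ | ⟨h1, _⟩ <;> rw [this, h1] <;> simp
    · have : M b a = min a b := by rw [← hmin a b, min_eq_right h]
      rcases min_cases a b with ⟨h1, _⟩ | ⟨h1, _⟩ <;> rw [this, h1] <;> simp
  have hne : ∀ a b : ℝ, a ≠ b → P a b ≠ M b a := by
    intro a b hab hc
    have h1 := hmax a b
    have h2 := hmin a b
    rw [← hc] at h1 h2
    simp only [max_self, min_self] at h1 h2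
    exact hab (le_antisymm (by linarith [le_max_left a b, min_le_left a b, le_max_right a b, min_le_right a b]) (by linarith [le_max_left a b, min_le_left a b, le_max_right a b, min_le_right a b]))
  have hcomplA : ∀ a b : ℝ, a ≠ b → P a b = a → M b a = b := by
    intro a b hab hPa
    rcases hmemM a b with h | h
    · exact absurd (hPa.trans h.symm) (hne a b hab)
    · exact h
  have hcomplB : ∀ a b : ℝ, a ≠ b → P a b = b → M b a = a := by
    intro a b hab hPb
    rcases hmemM a b with h | h
    · exact h
    · exact absurd (hPb.trans h.symm) (hne a b hab)
  have hPss : ∀ s : ℝ, P s s = s := by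
    intro s
    rcases hmem s s with h | h <;> exact h
  have stepA : ∀ a b δ : ℝ, a ≠ b → |δ| < |b - a| → P a b = a → P (a + δ) (b + δ) = a + δ := by
    intro a b δ hab hδ hPa
    rcases hmem (a + δ) (b + δ) with h | h
    · exact h
    exfalso
    have hab' : a + δ ≠ b + δ := by intro hc; exact hab (by linarith)
    have hM1 : M (b + δ) (a + δ) = a + δ := hcomplB _ _ hab' h
    have hM0 : M b a = b := hcomplA a b hab hPa
    rcases lt_or_gt_of_ne hab with hlt | hlt
    · -- a < b
      have habs : -(b - a) < δ ∧ δ < b - a := abs_lt.mp (by rwa [abs_of_pos (by linarith : (0:ℝ) < b - a)] at hδ)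
      rcases le_or_gt 0 δ with hd | hd
      · have := hM b (b + δ) a (a + δ) (by linarith) (by linarith)
        rw [hM0, hM1] at this; linarith [habs.2]
      · have := hP (a + δ) a (b + δ) b (by linarith) (by linarith)
        rw [h, hPa] at this; linarith [habs.1]
    · -- b < a
      have habs : -(a - b) < δ ∧ δ < a - b := abs_lt.mp (by rwa [abs_of_neg (by linarith : b - a < 0), neg_sub] at hδ)
      rcases le_or_gt 0 δ with hd | hd
      · have := hP a (a + δ) b (b + δ) (by linarith) (by linarith)
        rw [h, hPa] at this; linarith [habs.2]
      · have := hM (b + δ) b (a + δ) a (by linarith) (by linarith)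
        rw [hM0, hM1] at this; linarith [habs.1]
  have stepB : ∀ a b δ : ℝ, a ≠ b → |δ| < |b - a| → P a b = b → P (a + δ) (b + δ) = b + δ := by
    intro a b δ hab hδ hPb
    rcases hmem (a + δ) (b + δ) with h | h
    swap
    · exact h
    exfalso
    have hab' : a + δ ≠ b + δ := by intro hc; exact hab (by linarith)
    have hM1 : M (b + δ) (a + δ) = b + δ := hcomplA _ _ hab' h
    have hM0 : M b a = a := hcomplB a b hab hPb
    rcases lt_or_gt_of_ne hab with hlt | hlt
    · have habs : -(b - a) < δ ∧ δ < b - a := abs_lt.mp (by rwa [abs_of_pos (by linarith : (0:ℝ) < b - a)] at hδ)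
      rcases le_or_gt 0 δ with hd | hd
      · have := hP a (a + δ) b (b + δ) (by linarith) (by linarith)
        rw [h, hPb] at this; linarith [habs.2]
      · have := hM (b + δ) b (a + δ) a (by linarith) (by linarith)
        rw [hM0, hM1] at this; linarith [habs.1]
    · have habs : -(a - b) < δ ∧ δ < a - b := abs_lt.mp (by rwa [abs_of_neg (by linarith : b - a < 0), neg_sub] at hδ)
      rcases le_or_gt 0 δ with hd | hd
      · have := hM b (b + δ) a (a + δ) (by linarith) (by linarith)
        rw [hM0, hM1] at this; linarith [habs.2]
      · have := hP (a + δ) a (b + δ) b (by linarith) (by linarith)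
        rw [h, hPb] at this; linarith [habs.1]
  rw [continuous_iff_continuousAt]
  rintro ⟨a, b⟩
  rw [Metric.continuousAt_iff]
  intro ε hε
  by_cases hab : a = b
  · subst hab
    refine ⟨ε/2, by linarith, ?_⟩
    rintro ⟨x, y⟩ hdist
    have hx : dist x a < ε/2 := lt_of_le_of_lt (le_max_left _ _) (by rwa [Prod.dist_eq] at hdist)
    have hy : dist y a < ε/2 := lt_of_le_of_lt (le_max_right _ _) (by rwa [Prod.dist_eq] at hdist)
    rw [Real.dist_eq] at hx hy ⊢
    have hx' := abs_lt.mp hx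
    have hy' := abs_lt.mp hy
    have hlo : P (a - ε/2) (a - ε/2) ≤ P x y := hP _ _ _ _ (by linarith [hx'.1]) (by linarith [hy'.1])
    have hhi : P x y ≤ P (a + ε/2) (a + ε/2) := hP _ _ _ _ (by linarith [hx'.2]) (by linarith [hy'.2])
    rw [hPss] at hlo hhi
    rw [hPss, abs_lt]
    constructor <;> linarith
  · set δ := min (ε/2) (|b - a|/2) with hδdef
    have habs : 0 < |b - a| := abs_pos.mpr (sub_ne_zero.mpr (Ne.symm hab))
    have hδpos : 0 < δ := lt_min (by linarith) (by linarith)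
    have hδε : δ ≤ ε/2 := min_le_left _ _
    have hδab : |δ| < |b - a| := by
      rw [abs_of_pos hδpos]
      calc δ ≤ |b - a|/2 := min_le_right _ _
        _ < |b - a| := by linarith
    have hδab' : |(-δ)| < |b - a| := by rwa [abs_neg]
    refine ⟨δ, hδpos, ?_⟩
    rintro ⟨x, y⟩ hdist
    have hx : dist x a < δ := lt_of_le_of_lt (le_max_left _ _) (by rwa [Prod.dist_eq] at hdist)
    have hy : dist y b < δ := lt_of_le_of_lt (le_max_right _ _) (by rwa [Prod.dist_eq] at hdist)
    rw [Real.dist_eq] at hx hy ⊢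
    have hx' := abs_lt.mp hx
    have hy' := abs_lt.mp hy
    have hlo : P (a + (-δ)) (b + (-δ)) ≤ P x y := hP _ _ _ _ (by linarith [hx'.1]) (by linarith [hy'.1])
    have hhi : P x y ≤ P (a + δ) (b + δ) := hP _ _ _ _ (by linarith [hx'.2]) (by linarith [hy'.2])
    rcases hmem a b with hs | hs
    · rw [stepA a b (-δ) hab hδab' hs] at hlo
      rw [stepA a b δ hab hδab hs] at hhi
      rw [hs, abs_lt]; constructor <;> linarith
    · rw [stepB a b (-δ) hab hδab' hs] at hlo
      rw [stepB a b δ hab hδab hs] at hhi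
      rw [hs, abs_lt]; constructor <;> linarith

lemma aux_vol_stmt10 {α : Type*} [MeasurableSpace α] (μ : Measure α) (A B : Set α)
    [DecidablePred (· ∈ A)] [DecidablePred (· ∈ B)]
    (hA : MeasurableSet A) (hB : MeasurableSet B) (hAB : ∀ x, x ∈ A → x ∈ B → False)
    (p q r t : ℝ) :
    μ {x | t < (if x ∈ A then p else if x ∈ B then q else r)} =
      (if t < p then μ A else 0) + (if t < q then μ B else 0) +
        (if t < r then μ ((A ∪ B)ᶜ) else 0) := by
  have hdAB : Disjoint A B := Set.disjoint_left.mpr fun {a} ha hb => hAB a ha hb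
  have hset : {x | t < (if x ∈ A then p else if x ∈ B then q else r)} =
      ((if t < p then A else ∅) ∪ (if t < q then B else ∅)) ∪
        (if t < r then (A ∪ B)ᶜ else ∅) := by
    ext x
    have mem_ite : ∀ (c : Prop) [Decidable c] (S : Set α),
        (x ∈ if c then S else (∅ : Set α)) ↔ c ∧ x ∈ S := by
      intro c hc S; split_ifs with h <;> simp [h]
    by_cases h1 : x ∈ A
    · have h2 : x ∉ B := fun h2 => hAB x h1 h2
      simp [mem_ite, h1, h2]
    · by_cases h2 : x ∈ B <;> simp [mem_ite, h1, h2]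
  have m1 : MeasurableSet (if t < p then A else (∅ : Set α)) := by
    split_ifs; exacts [hA, MeasurableSet.empty]
  have m2 : MeasurableSet (if t < q then B else (∅ : Set α)) := by
    split_ifs; exacts [hB, MeasurableSet.empty]
  have m3 : MeasurableSet (if t < r then (A ∪ B)ᶜ else (∅ : Set α)) := by
    split_ifs; exacts [(hA.union hB).compl, MeasurableSet.empty]
  have sub1 : (if t < p then A else (∅:Set α)) ⊆ A := by split_ifs <;> simp
  have sub2 : (if t < q then B else (∅:Set α)) ⊆ B := by split_ifs <;> simp
  have sub3 : (if t < r then (A ∪ B)ᶜ else (∅:Set α)) ⊆ (A ∪ B)ᶜ := by split_ifs <;> simp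
  have hd2 : Disjoint (if t < p then A else (∅:Set α)) (if t < q then B else (∅:Set α)) :=
    hdAB.mono sub1 sub2
  have hd1 : Disjoint ((if t < p then A else (∅:Set α)) ∪ (if t < q then B else (∅:Set α)))
      (if t < r then (A ∪ B)ᶜ else (∅:Set α)) :=
    (disjoint_compl_right.mono (Set.union_subset_union sub1 sub2) sub3)
  rw [hset, measure_union hd1 m3, measure_union hd2 m2,
    apply_ite μ, apply_ite μ, apply_ite μ, measure_empty]

set_option maxHeartbeats 2000000 in
theorem stmt_10 {n : ℕ} (u : EuclideanSpace ℝ (Fin n)) (hu : ‖u‖ = 1)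
    (T : (EuclideanSpace ℝ (Fin n) → ℝ) → (EuclideanSpace ℝ (Fin n) → ℝ))
    (Fp Fm : ℝ → ℝ → ℝ)
    (hdiag : ∀ s : ℝ, Fp s s = Fm s s)
    (hpt : ∀ f x, T f x =
      if 0 ≤ ⟪x, u⟫ then Fp (f x) (f (x - (2 * ⟪x, u⟫) • u))
      else Fm (f x) (f (x - (2 * ⟪x, u⟫) • u)))
    (hmeas : ∀ f, Measurable f → Measurable (T f))
    (hequi : ∀ f : EuclideanSpace ℝ (Fin n) → ℝ, Measurable f → ∀ t : ℝ,
      volume {x | t < T f x} = volume {x | t < f x})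
    (hmono : ∀ f g, Measurable f → Measurable g →
      f ≤ᵐ[volume] g → T f ≤ᵐ[volume] T g) :
    Continuous (fun p : ℝ × ℝ => Fp p.1 p.2) ∧
    Continuous (fun p : ℝ × ℝ => Fm p.1 p.2) := by
  classical
  have huu : ⟪u, u⟫ = 1 := by
    rw [real_inner_self_eq_norm_mul_norm, hu]; ring
  have hσinner : ∀ x : EuclideanSpace ℝ (Fin n), ⟪x - (2 * ⟪x, u⟫) • u, u⟫ = -⟪x, u⟫ := by
    intro x
    simp only [inner_sub_left, real_inner_smul_left, huu]
    ring
  have hn2 : ∀ x : EuclideanSpace ℝ (Fin n), ‖x - (2 * ⟪x, u⟫) • u - u‖ = ‖x + u‖ := by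
    intro x
    have hsq : ‖x - (2 * ⟪x, u⟫) • u - u‖ ^ 2 = ‖x + u‖ ^ 2 := by
      rw [← real_inner_self_eq_norm_sq, ← real_inner_self_eq_norm_sq]
      simp only [inner_sub_left, inner_sub_right, inner_add_left, inner_add_right,
        real_inner_smul_left, real_inner_smul_right, huu, real_inner_comm u x]
      ring
    exact (sq_eq_sq₀ (norm_nonneg _) (norm_nonneg _)).mp hsq
  have hn1 : ∀ x : EuclideanSpace ℝ (Fin n), ‖x - (2 * ⟪x, u⟫) • u + u‖ = ‖x - u‖ := by
    intro x
    have hsq : ‖x - (2 * ⟪x, u⟫) • u + u‖ ^ 2 = ‖x - u‖ ^ 2 := by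
      rw [← real_inner_self_eq_norm_sq, ← real_inner_self_eq_norm_sq]
      simp only [inner_sub_left, inner_sub_right, inner_add_left, inner_add_right,
        real_inner_smul_left, real_inner_smul_right, huu, real_inner_comm u x]
      ring
    exact (sq_eq_sq₀ (norm_nonneg _) (norm_nonneg _)).mp hsq
  set B1 := Metric.ball u (1/2 : ℝ) with hB1
  set B2 := Metric.ball (-u) (1/2 : ℝ) with hB2
  have hmem1 : ∀ x : EuclideanSpace ℝ (Fin n), (x - (2 * ⟪x, u⟫) • u) ∈ B1 ↔ x ∈ B2 := by
    intro x
    rw [hB1, hB2, Metric.mem_ball, Metric.mem_ball, dist_eq_norm, dist_eq_norm,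
      show x - (2 * ⟪x, u⟫) • u - u = x - (2 * ⟪x, u⟫) • u - u from rfl, hn2,
      show x - -u = x + u from by abel]
  have hmem2 : ∀ x : EuclideanSpace ℝ (Fin n), (x - (2 * ⟪x, u⟫) • u) ∈ B2 ↔ x ∈ B1 := by
    intro x
    rw [hB1, hB2, Metric.mem_ball, Metric.mem_ball, dist_eq_norm, dist_eq_norm,
      show x - (2 * ⟪x, u⟫) • u - -u = x - (2 * ⟪x, u⟫) • u + u from by abel, hn1]
  have hdisj : ∀ x, x ∈ B1 → x ∈ B2 → False := by
    intro x h1 h2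
    rw [hB1, Metric.mem_ball, dist_eq_norm] at h1
    rw [hB2, Metric.mem_ball, dist_eq_norm, show x - -u = x + u from by abel] at h2
    have h3 : ‖x + u - (x - u)‖ ≤ ‖x + u‖ + ‖x - u‖ := norm_sub_le _ _
    rw [show x + u - (x - u) = (2:ℝ) • u from by module] at h3
    rw [norm_smul, hu] at h3
    simp at h3
    linarith
  have hpos1 : ∀ x, x ∈ B1 → 0 < ⟪x, u⟫ := by
    intro x hx
    rw [hB1, Metric.mem_ball, dist_eq_norm] at hx
    have h1 : |⟪x - u, u⟫| ≤ ‖x - u‖ * ‖u‖ := abs_real_inner_le_norm _ _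
    rw [hu, mul_one] at h1
    have h2 : ⟪x - u, u⟫ = ⟪x, u⟫ - 1 := by
      simp only [inner_sub_left, huu]
    rw [h2] at h1
    have h3 := abs_lt.mp (lt_of_le_of_lt h1 hx)
    linarith [h3.1]
  have hneg2 : ∀ x, x ∈ B2 → ⟪x, u⟫ < 0 := by
    intro x hx
    rw [hB2, Metric.mem_ball, dist_eq_norm, show x - -u = x + u from by abel] at hx
    have h1 : |⟪x + u, u⟫| ≤ ‖x + u‖ * ‖u‖ := abs_real_inner_le_norm _ _
    rw [hu, mul_one] at h1
    have h2 : ⟪x + u, u⟫ = ⟪x, u⟫ + 1 := by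
      simp only [inner_add_left, huu]
    rw [h2] at h1
    have h3 := abs_lt.mp (lt_of_le_of_lt h1 hx)
    linarith [h3.2]
  have hmB1 : MeasurableSet B1 := by rw [hB1]; exact measurableSet_ball
  have hmB2 : MeasurableSet B2 := by rw [hB2]; exact measurableSet_ball
  have hv0 : volume B1 ≠ 0 := (Metric.measure_ball_pos _ _ (by norm_num)).ne'
  have hvt : volume B1 ≠ ⊤ := measure_ball_lt_top.ne
  have hv21 : volume B2 = volume B1 := by
    have hBneg : B2 = -B1 := by
      ext x
      rw [Set.mem_neg, hB1, hB2, Metric.mem_ball, Metric.mem_ball, dist_eq_norm, dist_eq_norm,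
        show -x - u = -(x - -u) from by abel, norm_neg]
    rw [hBneg]
    exact Measure.measure_neg volume B1
  have huniv : volume (univ : Set (EuclideanSpace ℝ (Fin n))) ≠ 0 :=
    fun h => hv0 (measure_mono_null (subset_univ B1) h)
  -- diagonal values
  have hdiagval : ∀ s : ℝ, Fp s s = s := by
    intro s
    have hTc : ∀ x, T (fun _ => s) x = Fp s s := by
      intro x
      rw [hpt]
      split_ifs
      · rfl
      · exact (hdiag s).symm
    by_contra hne
    rcases lt_or_gt_of_ne hne with hlt | hlt
    · have h := hequi (fun _ => s) measurable_const (Fp s s)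
      simp only [hTc, lt_self_iff_false, Set.setOf_false, measure_empty, hlt, Set.setOf_true] at h
      exact huniv h.symm
    · have h := hequi (fun _ => s) measurable_const s
      simp only [hTc, hlt, Set.setOf_true, lt_self_iff_false, Set.setOf_false, measure_empty] at h
      exact huniv h
  -- monotonicity of Fp
  have hinnerm : Measurable fun x : EuclideanSpace ℝ (Fin n) => ⟪x, u⟫ :=
    (continuous_id.inner continuous_const).measurable
  have hS : MeasurableSet {x : EuclideanSpace ℝ (Fin n) | 0 ≤ ⟪x, u⟫} :=
    measurableSet_le measurable_const hinnerm
  have hmonoFp : ∀ a a' b b' : ℝ, a ≤ a' → b ≤ b' → Fp a b ≤ Fp a' b' := by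
    intro a a' b b' haa hbb
    by_contra hlt
    push_neg at hlt
    set f : EuclideanSpace ℝ (Fin n) → ℝ := fun x => if 0 ≤ ⟪x, u⟫ then a else b with hfdef
    set g : EuclideanSpace ℝ (Fin n) → ℝ := fun x => if 0 ≤ ⟪x, u⟫ then a' else b' with hgdef
    have hf : Measurable f := Measurable.ite hS measurable_const measurable_const
    have hg : Measurable g := Measurable.ite hS measurable_const measurable_const
    have hfg : f ≤ᵐ[volume] g := Filter.Eventually.of_forall (fun x => by
      simp only [hfdef, hgdef]; split_ifs <;> assumption)
    have key := hmono f g hf hg hfg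
    have hbad : B1 ⊆ {x | ¬ T f x ≤ T g x} := by
      intro x hx
      have hx0 : 0 < ⟪x, u⟫ := hpos1 x hx
      have hc : ¬ (0 ≤ ⟪x - (2 * ⟪x, u⟫) • u, u⟫) := by rw [hσinner x]; linarith
      have hTfx : T f x = Fp a b := by
        rw [hpt, if_pos hx0.le]
        simp only [hfdef]
        rw [if_pos hx0.le, if_neg hc]
      have hTgx : T g x = Fp a' b' := by
        rw [hpt, if_pos hx0.le]
        simp only [hgdef]
        rw [if_pos hx0.le, if_neg hc]
      rw [mem_setOf_eq, hTfx, hTgx]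
      exact not_le.mpr hlt
    exact hv0 (measure_mono_null hbad (ae_iff.mp key))
  -- monotonicity of Fm
  have hmonoFm : ∀ a a' b b' : ℝ, a ≤ a' → b ≤ b' → Fm a b ≤ Fm a' b' := by
    intro a a' b b' haa hbb
    by_contra hlt
    push_neg at hlt
    set f : EuclideanSpace ℝ (Fin n) → ℝ := fun x => if 0 ≤ ⟪x, u⟫ then b else a with hfdef
    set g : EuclideanSpace ℝ (Fin n) → ℝ := fun x => if 0 ≤ ⟪x, u⟫ then b' else a' with hgdef
    have hf : Measurable f := Measurable.ite hS measurable_const measurable_const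
    have hg : Measurable g := Measurable.ite hS measurable_const measurable_const
    have hfg : f ≤ᵐ[volume] g := Filter.Eventually.of_forall (fun x => by
      simp only [hfdef, hgdef]; split_ifs <;> assumption)
    have key := hmono f g hf hg hfg
    have hbad : B2 ⊆ {x | ¬ T f x ≤ T g x} := by
      intro x hx
      have hx0 : ⟪x, u⟫ < 0 := hneg2 x hx
      have hc : (0 ≤ ⟪x - (2 * ⟪x, u⟫) • u, u⟫) := by rw [hσinner x]; linarith
      have hTfx : T f x = Fm a b := by
        rw [hpt, if_neg (not_le.mpr hx0)]
        simp only [hfdef]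
        rw [if_neg (not_le.mpr hx0), if_pos hc]
      have hTgx : T g x = Fm a' b' := by
        rw [hpt, if_neg (not_le.mpr hx0)]
        simp only [hgdef]
        rw [if_neg (not_le.mpr hx0), if_pos hc]
      rw [mem_setOf_eq, hTfx, hTgx]
      exact not_le.mpr hlt
    refine hv0 ?_
    rw [← hv21]
    exact measure_mono_null hbad (ae_iff.mp key)
  -- helper facts about the volume of B1
  have hvv : volume B1 + volume B1 ≠ volume B1 := by
    intro h
    conv at h => rw [show volume B1 + volume B1 = volume B1 + volume B1 from rfl]
    nth_rewrite 3 [← add_zero (volume B1)] at h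
    exact hv0 ((ENNReal.add_right_inj hvt).mp h)
  have hvv0 : volume B1 + volume B1 ≠ 0 := by simp [hv0]
  -- pair identity
  have hpair : ∀ a b : ℝ, max (Fp a b) (Fm b a) = max a b ∧ min (Fp a b) (Fm b a) = min a b := by
    intro a b
    have hcP : min a b ≤ Fp a b := by
      calc min a b = Fp (min a b) (min a b) := (hdiagval _).symm
        _ ≤ Fp a b := hmonoFp _ _ _ _ (min_le_left a b) (min_le_right a b)
    have hcM : min a b ≤ Fm b a := by
      have h1 : Fm (min a b) (min a b) = min a b := (hdiag _).symm.trans (hdiagval _)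
      calc min a b = Fm (min a b) (min a b) := h1.symm
        _ ≤ Fm b a := hmonoFm _ _ _ _ (min_le_right a b) (min_le_left a b)
    set f : EuclideanSpace ℝ (Fin n) → ℝ :=
      fun x => if x ∈ B1 then a else if x ∈ B2 then b else min a b with hfdef
    have hf : Measurable f :=
      Measurable.ite hmB1 measurable_const
        (Measurable.ite hmB2 measurable_const measurable_const)
    have hTf : ∀ x, T f x = if x ∈ B1 then Fp a b else if x ∈ B2 then Fm b a else min a b := by
      intro x
      rw [hpt]
      by_cases h1 : x ∈ B1
      · have hx0 : 0 ≤ ⟪x, u⟫ := (hpos1 x h1).le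
        have hs2 : (x - (2 * ⟪x, u⟫) • u) ∈ B2 := (hmem2 x).mpr h1
        have hs1 : (x - (2 * ⟪x, u⟫) • u) ∉ B1 := fun h => hdisj _ h hs2
        rw [if_pos hx0, if_pos h1]
        simp only [hfdef]
        rw [if_pos h1, if_neg hs1, if_pos hs2]
      · by_cases h2 : x ∈ B2
        · have hx0 : ¬ (0 ≤ ⟪x, u⟫) := not_le.mpr (hneg2 x h2)
          have hs1 : (x - (2 * ⟪x, u⟫) • u) ∈ B1 := (hmem1 x).mpr h2
          rw [if_neg hx0, if_neg h1, if_pos h2]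
          simp only [hfdef]
          rw [if_neg h1, if_pos h2, if_pos hs1]
        · have hs1 : (x - (2 * ⟪x, u⟫) • u) ∉ B1 := fun h => h2 ((hmem1 x).mp h)
          have hs2 : (x - (2 * ⟪x, u⟫) • u) ∉ B2 := fun h => h1 ((hmem2 x).mp h)
          rw [if_neg h1, if_neg h2]
          simp only [hfdef]
          rw [if_neg hs1, if_neg hs2, if_neg h1, if_neg h2]
          split_ifs with h0
          · exact hdiagval _
          · exact (hdiag _).symm.trans (hdiagval _)
    have key2 : ∀ t : ℝ, ((t < Fp a b ∨ t < Fm b a) ↔ (t < a ∨ t < b)) ∧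
        ((t < Fp a b ∧ t < Fm b a) ↔ (t < a ∧ t < b)) := by
      intro t
      by_cases htc : t < min a b
      · have k1 : t < Fp a b := lt_of_lt_of_le htc hcP
        have k2 : t < Fm b a := lt_of_lt_of_le htc hcM
        have k3 : t < a := lt_of_lt_of_le htc (min_le_left a b)
        have k4 : t < b := lt_of_lt_of_le htc (min_le_right a b)
        simp [k1, k2, k3, k4]
      · have heq := hequi f hf t
        have hsetT : {x | t < T f x} =
            {x | t < (if x ∈ B1 then Fp a b else if x ∈ B2 then Fm b a else min a b)} := by
          ext x; rw [mem_setOf_eq, mem_setOf_eq, hTf x]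
        rw [hsetT] at heq
        simp only [hfdef] at heq
        rw [aux_vol_stmt10 volume B1 B2 hmB1 hmB2 hdisj (Fp a b) (Fm b a) (min a b) t,
          aux_vol_stmt10 volume B1 B2 hmB1 hmB2 hdisj a b (min a b) t] at heq
        rw [hv21, if_neg htc, add_zero, add_zero] at heq
        by_cases k1 : t < Fp a b <;> by_cases k2 : t < Fm b a <;>
          by_cases k3 : t < a <;> by_cases k4 : t < b <;>
          simp only [k1, k2, k3, k4, if_true, if_false, add_zero, zero_add] at heq ⊢ <;>
          first
            | tauto
            | (exfalso; first
                | exact hvv heq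
                | exact hvv heq.symm
                | exact hvv0 heq
                | exact hvv0 heq.symm
                | exact hv0 heq
                | exact hv0 heq.symm)
    constructor
    · exact eq_of_forall_lt_iff (fun d => by rw [lt_max_iff, lt_max_iff]; exact (key2 d).1)
    · exact eq_of_forall_lt_iff (fun d => by rw [lt_min_iff, lt_min_iff]; exact (key2 d).2)
  constructor
  · exact aux_cont_stmt10 Fp Fm hmonoFp hmonoFm (fun a b => (hpair a b).1) (fun a b => (hpair a b).2)
  · apply aux_cont_stmt10 Fm Fp hmonoFm hmonoFp
    · intro a b
      rw [max_comm (Fm a b) (Fp b a), max_comm a b]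
      exact (hpair b a).1
    · intro a b
      rw [min_comm (Fm a b) (Fp b a), min_comm a b]
      exact (hpair b a).2
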